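/- Let k ≥ 2 and n = 2k. Then the radio number of C_n □ C_n satisfies rn(C_n □ C_n) ≥ ((n² − 2)/2)·(k + 2) + 2. -/

import Mathlib

/-!
If a radio labeling gives the vertices `u, v, w` labels `a < b < c`, adding the three radio
conditions gives `2 (c - a) ≥ 3 (diam + 1) - (d(u,v) + d(v,w) + d(u,w))`. On `C_n □ C_n` the
distance is the sum of the two cyclic distances, so every triangle has perimeter at most `2n`,
while the diameter is at least `n = 2k`. Hence in the sorted list of the `n² = 2(2k² - 1) + 2`
labels, entries two places apart differ by at least `k + 2`, which forces the last label to be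
at least `(2k² - 1)(k + 2) + 2`.
-/

open SimpleGraph

/-- `c` is a radio labeling of `G`: labels are positive integers and for every two
distinct vertices `u, v` we have `d(u,v) + |c(u) - c(v)| ≥ 1 + diam(G)`. -/
def IsRadioLabeling {V : Type*} (G : SimpleGraph V) (c : V → ℕ) : Prop :=
  (∀ v, 1 ≤ c v) ∧
    ∀ u v : V, u ≠ v → G.diam + 1 ≤ G.dist u v + Nat.dist (c u) (c v)

/-- The span of a labeling: the maximum label used. -/
def labelSpan {V : Type*} [Fintype V] (c : V → ℕ) : ℕ := Finset.univ.sup c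

/-- The radio number of `G`: the minimum span over all radio labelings. -/
noncomputable def radioNumber {V : Type*} [Fintype V] (G : SimpleGraph V) : ℕ :=
  sInf {s | ∃ c : V → ℕ, IsRadioLabeling G c ∧ labelSpan c = s}

theorem Fin.val_sub_add_val {n : ℕ} (a b : Fin n) :
    (a - b).val + b.val = a.val ∨ (a - b).val + b.val = a.val + n := by
  rcases le_or_gt b a with h | h
  · left
    have := Fin.sub_val_of_le h
    have := Fin.le_def.1 h
    omega
  · right
    have := Fin.coe_sub_iff_lt.2 h
    have := Fin.lt_def.1 h
    omega

theorem Finset.exists_add_mul_le_of_forall_add_le {l g m : ℕ} {s : Finset ℕ}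
    (hl : ∀ a ∈ s, l ≤ a) (hg : ∀ a ∈ s, ∀ b ∈ s, ∀ c ∈ s, a < b → b < c → a + g ≤ c)
    (hs : 2 * m + 1 ≤ s.card) : ∃ c ∈ s, l + m * g ≤ c := by
  induction m generalizing s with
  | zero =>
    obtain ⟨a, ha⟩ := Finset.card_pos.1 (by omega : 0 < s.card)
    exact ⟨a, ha, by simpa using hl a ha⟩
  | succ m ih =>
    have hs₀ : s.Nonempty := Finset.card_pos.1 (by omega)
    have hs₁ : (s.erase (s.max' hs₀)).Nonempty := by
      rw [← Finset.card_pos, Finset.card_erase_of_mem (s.max'_mem hs₀)]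
      omega
    set c := s.max' hs₀
    set b := (s.erase c).max' hs₁
    have hb : b ∈ s.erase c := (s.erase c).max'_mem hs₁
    have hsub : (s.erase c).erase b ⊆ s :=
      (Finset.erase_subset _ _).trans (Finset.erase_subset _ _)
    obtain ⟨a, ha, hla⟩ := ih (fun a ha => hl a (hsub ha))
      (fun a ha b hb c hc => hg a (hsub ha) b (hsub hb) c (hsub hc))
      (by rw [Finset.card_erase_of_mem hb, Finset.card_erase_of_mem (s.max'_mem hs₀)]; omega)
    have hab : a < b := (s.erase c).lt_max'_of_mem_erase_max' hs₁ ha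
    have hbc : b < c := s.lt_max'_of_mem_erase_max' hs₀ hb
    have hac := hg a (hsub ha) b (Finset.mem_of_mem_erase hb) c (s.max'_mem hs₀) hab hbc
    exact ⟨c, s.max'_mem hs₀, by rw [add_one_mul]; omega⟩

section Radio

variable {V : Type*} {G : SimpleGraph V} {c : V → ℕ}

theorem IsRadioLabeling.injective (hc : IsRadioLabeling G c) (hG : G.ediam ≠ ⊤) :
    Function.Injective c := by
  intro u v huv
  by_contra hne
  have := hc.2 u v hne
  rw [huv, Nat.dist_self] at this
  have := dist_le_diam hG (u := u) (v := v)
  omega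

theorem IsRadioLabeling.ceil_half_le_sub (hc : IsRadioLabeling G c) {P : ℕ} {u v w : V}
    (hP : G.dist u v + G.dist v w + G.dist u w ≤ P) (huv : c u < c v) (hvw : c v < c w) :
    (3 * (G.diam + 1) - P + 1) / 2 ≤ c w - c u := by
  have h₁ := hc.2 u v (fun h => by simp [h] at huv)
  have h₂ := hc.2 v w (fun h => by simp [h] at hvw)
  have h₃ := hc.2 u w (fun h => by simp [h] at huv; omega)
  rw [Nat.dist_eq_sub_of_le huv.le] at h₁
  rw [Nat.dist_eq_sub_of_le hvw.le] at h₂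
  rw [Nat.dist_eq_sub_of_le (huv.trans hvw).le] at h₃
  omega

theorem le_labelSpan [Fintype V] (v : V) : c v ≤ labelSpan c :=
  Finset.le_sup (Finset.mem_univ v)

theorem IsRadioLabeling.le_labelSpan_of_perimeter_le [Fintype V]
    (hc : IsRadioLabeling G c) (hG : G.ediam ≠ ⊤) {P m : ℕ}
    (hP : ∀ u v w, G.dist u v + G.dist v w + G.dist u w ≤ P) (hV : 2 * m + 2 ≤ Fintype.card V) :
    m * ((3 * (G.diam + 1) - P + 1) / 2) + 2 ≤ labelSpan c := by
  set s := Finset.univ.image c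
  have hs : s.card = Fintype.card V := Finset.card_image_of_injective _ (hc.injective hG)
  have hne : s.Nonempty := Finset.card_pos.1 (by omega)
  have hpos : ∀ a ∈ s, 1 ≤ a := by
    simp only [s, Finset.mem_image, Finset.mem_univ, true_and]
    rintro _ ⟨v, rfl⟩
    exact hc.1 v
  have hgap : ∀ a ∈ s, ∀ b ∈ s, ∀ d ∈ s, a < b → b < d →
      a + (3 * (G.diam + 1) - P + 1) / 2 ≤ d := by
    simp only [s, Finset.mem_image, Finset.mem_univ, true_and]
    rintro _ ⟨u, rfl⟩ _ ⟨v, rfl⟩ _ ⟨w, rfl⟩ huv hvw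
    have := hc.ceil_half_le_sub (hP u v w) huv hvw
    omega
  have hts : s.erase (s.max' hne) ⊆ s := Finset.erase_subset _ _
  obtain ⟨a, ha, hla⟩ :=
    Finset.exists_add_mul_le_of_forall_add_le (m := m) (s := s.erase (s.max' hne))
      (fun a ha => hpos a (hts ha)) (fun a ha b hb d hd => hgap a (hts ha) b (hts hb) d (hts hd))
      (by rw [Finset.card_erase_of_mem (s.max'_mem hne)]; omega)
  have hlt := s.lt_max'_of_mem_erase_max' hne ha
  obtain ⟨v, -, hv⟩ := Finset.mem_image.1 (s.max'_mem hne)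
  have := le_labelSpan (c := c) v
  omega

theorem exists_isRadioLabeling [Fintype V] (G : SimpleGraph V) : ∃ c, IsRadioLabeling G c := by
  let e := Fintype.equivFin V
  refine ⟨fun v => 1 + (e v).val * (G.diam + 1), fun v => Nat.le_add_right 1 _, fun u v huv => ?_⟩
  have : (e u).val ≠ (e v).val := fun h => huv (e.injective (Fin.ext h))
  rw [Nat.dist_add_add_left, Nat.dist_mul_right]
  have : 1 ≤ Nat.dist (e u).val (e v).val := Nat.dist_pos_of_ne this
  nlinarith

theorem le_radioNumber [Fintype V] {b : ℕ} (h : ∀ c, IsRadioLabeling G c → b ≤ labelSpan c) :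
    b ≤ radioNumber G := by
  obtain ⟨c, hc⟩ := exists_isRadioLabeling G
  exact le_csInf ⟨_, c, hc, rfl⟩ fun _ ⟨c, hc, hs⟩ => hs ▸ h c hc

end Radio

namespace SimpleGraph

theorem dist_boxProd {α β : Type*} {G : SimpleGraph α} {H : SimpleGraph β}
    (hG : G.Connected) (hH : H.Connected) (x y : α × β) :
    (G □ H).dist x y = G.dist x.1 y.1 + H.dist x.2 y.2 := by
  have h := edist_boxProd (G := G) (H := H) x y
  rw [← ((hG.boxProd hH).preconnected x y).coe_dist_eq_edist,
    ← (hG.preconnected x.1 y.1).coe_dist_eq_edist,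
    ← (hH.preconnected x.2 y.2).coe_dist_eq_edist] at h
  exact_mod_cast h

theorem cycleGraph_connected_of_neZero {n : ℕ} [NeZero n] : (cycleGraph n).Connected := by
  obtain ⟨m, rfl⟩ := Nat.exists_eq_succ_of_ne_zero (NeZero.ne n)
  exact cycleGraph_connected

theorem cycleGraph_dist_add_one_le {n : ℕ} [NeZero n] (x : Fin n) :
    (cycleGraph n).dist x (x + 1) ≤ 1 := by
  obtain ⟨m, rfl⟩ := Nat.exists_eq_succ_of_ne_zero (NeZero.ne n)
  cases m with
  | zero => rw [Subsingleton.elim (x + 1) x, dist_self]; exact zero_le_one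
  | succ m =>
    have hadj : (cycleGraph (m + 2)).Adj x (x + 1) := by simp [cycleGraph_adj]
    exact (dist_eq_one_iff_adj.2 hadj).le

open Fin.NatCast in
theorem cycleGraph_dist_le_val_sub {n : ℕ} (u v : Fin n) :
    (cycleGraph n).dist u v ≤ (v - u).val := by
  have := u.neZero
  suffices h : ∀ i : ℕ, (cycleGraph n).dist u (u + (i : Fin n)) ≤ i by
    simpa using h (v - u).val
  intro i
  induction i with
  | zero => simp
  | succ i ih =>
    calc (cycleGraph n).dist u (u + ((i + 1 : ℕ) : Fin n))
        ≤ (cycleGraph n).dist u (u + (i : Fin n)) +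
            (cycleGraph n).dist (u + (i : Fin n)) (u + (i : Fin n) + 1) := by
          rw [Nat.cast_succ, ← add_assoc]
          exact cycleGraph_connected_of_neZero.dist_triangle
      _ ≤ i + 1 := add_le_add ih (cycleGraph_dist_add_one_le _)

theorem cycleGraph_min_val_sub_le_length {n : ℕ} {u v : Fin n} (w : (cycleGraph n).Walk u v) :
    min (u - v).val (v - u).val ≤ w.length := by
  induction w with
  | @nil u =>
    have := Fin.val_sub_add_val u u
    have := (u - u).isLt
    simp only [Walk.length_nil]
    omega
  | @cons u z v h w ih =>
    rw [cycleGraph_adj'] at h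
    have := Fin.val_sub_add_val u v
    have := Fin.val_sub_add_val v u
    have := Fin.val_sub_add_val z v
    have := Fin.val_sub_add_val v z
    have := Fin.val_sub_add_val u z
    have := Fin.val_sub_add_val z u
    simp only [Walk.length_cons]
    omega

theorem cycleGraph_dist {n : ℕ} (u v : Fin n) :
    (cycleGraph n).dist u v = min (u - v).val (v - u).val := by
  have := u.neZero
  obtain ⟨w, hw⟩ := cycleGraph_connected_of_neZero.exists_walk_length_eq_dist u v
  refine le_antisymm (le_min ?_ (cycleGraph_dist_le_val_sub u v))
    (hw ▸ cycleGraph_min_val_sub_le_length w)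
  rw [dist_comm]
  exact cycleGraph_dist_le_val_sub v u

theorem cycleGraph_dist_add_dist_add_dist_le {n : ℕ} (a b c : Fin n) :
    (cycleGraph n).dist a b + (cycleGraph n).dist b c + (cycleGraph n).dist a c ≤ n := by
  simp only [cycleGraph_dist]
  have := Fin.val_sub_add_val a b
  have := Fin.val_sub_add_val b a
  have := Fin.val_sub_add_val b c
  have := Fin.val_sub_add_val c b
  have := Fin.val_sub_add_val a c
  have := Fin.val_sub_add_val c a
  omega

section Torus

variable {n : ℕ} [NeZero n]

theorem cycleGraph_boxProd_connected : (cycleGraph n □ cycleGraph n).Connected :=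
  cycleGraph_connected_of_neZero.boxProd cycleGraph_connected_of_neZero

theorem cycleGraph_boxProd_perimeter_le (u v w : Fin n × Fin n) :
    (cycleGraph n □ cycleGraph n).dist u v + (cycleGraph n □ cycleGraph n).dist v w +
      (cycleGraph n □ cycleGraph n).dist u w ≤ 2 * n := by
  simp only [dist_boxProd cycleGraph_connected_of_neZero cycleGraph_connected_of_neZero]
  have := cycleGraph_dist_add_dist_add_dist_le u.1 v.1 w.1
  have := cycleGraph_dist_add_dist_add_dist_le u.2 v.2 w.2
  omega

theorem two_mul_half_le_diam_cycleGraph_boxProd :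
    2 * (n / 2) ≤ (cycleGraph n □ cycleGraph n).diam := by
  have hn := Nat.pos_of_neZero n
  let x : Fin n := ⟨n / 2, by omega⟩
  have hdist : (cycleGraph n).dist 0 x = n / 2 := by
    have := Fin.val_sub_add_val 0 x
    have := Fin.val_sub_add_val x 0
    rw [cycleGraph_dist]
    simp only [Fin.val_zero, x] at *
    omega
  calc 2 * (n / 2) = (cycleGraph n □ cycleGraph n).dist (0, 0) (x, x) := by
        rw [dist_boxProd cycleGraph_connected_of_neZero cycleGraph_connected_of_neZero, hdist]
        ring
    _ ≤ _ := dist_le_diam (connected_iff_ediam_ne_top.1 cycleGraph_boxProd_connected)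

end Torus

end SimpleGraph

/-- for `n = 2k`, `k ≥ 2`, `rn(C_n □ C_n) ≥ ((n² - 2)/2)(k + 2) + 2`. -/
theorem radioNumber_even_lower_bound (n k : ℕ) (hk : 2 ≤ k) (hn : n = 2 * k) :
    (n ^ 2 - 2) / 2 * (k + 2) + 2 ≤ radioNumber (cycleGraph n □ cycleGraph n) := by
  subst hn
  have : NeZero (2 * k) := ⟨by omega⟩
  have hdiam := two_mul_half_le_diam_cycleGraph_boxProd (n := 2 * k)
  rw [Nat.mul_div_cancel_left k two_pos] at hdiam
  have hk2 : 1 ≤ k * k := Nat.mul_le_mul (by omega : 1 ≤ k) (by omega : 1 ≤ k)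
  refine le_radioNumber fun c hc => ?_
  have hspan := hc.le_labelSpan_of_perimeter_le
    (connected_iff_ediam_ne_top.1 cycleGraph_boxProd_connected) cycleGraph_boxProd_perimeter_le
    (m := 2 * (k * k) - 1) (by
      rw [Fintype.card_prod, Fintype.card_fin, show 2 * k * (2 * k) = 4 * (k * k) by ring]
      omega)
  calc ((2 * k) ^ 2 - 2) / 2 * (k + 2) + 2 = (2 * (k * k) - 1) * (k + 2) + 2 := by
        rw [show (2 * k) ^ 2 - 2 = 2 * (2 * (k * k) - 1) by rw [Nat.mul_sub]; ring_nf,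
          Nat.mul_div_cancel_left _ two_pos]
    _ ≤ labelSpan c := hspan.trans' (by gcongr; omega)
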